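/- arXiv:2404.05615 — 2 statements merged into one kernel-verified Lean document; each statement's English description precedes it below -/
import Mathlib

section
/- Let d ≥ 1, let Ω ⊆ ℝ^d be a bounded open set, and let q : ℝ^d → ℝ be a C² function with compact support contained in Ω. Let f : ℝ^d → ℝ^d be C¹ and D : ℝ^d → ℝ^{d×d} be C², and suppose: (i) D is uniformly elliptic on Ω with constant C_D > 0, i.e. ∑_{i,j} D_{ij}(x) ξ_i ξ_j ≥ C_D |ξ|² for all x ∈ Ω and ξ ∈ ℝ^d; (ii) C_P > 0 is a Poincaré constant for Ω, i.e. ∫_Ω u² dx ≤ C_P ∫_Ω |∇u|² dx for every C¹ function u compactly supported in Ω; (iii) with b_i = (1/2) ∑_{j=1}^d ∂_{x_j} D_{ij} − f_i, there is a constant C₀ > 0 such that C_D/C_P − (∇·b)(x) ≥ C₀ for all x ∈ Ω. Then C₀² ∫_Ω q(x)² dx ≤ 4 ∫_Ω (ℒq)(x)² dx, where ℒq = −∑_{i=1}^d ∂_{x_i}(f_i q) + (1/2) ∑_{i,j=1}^d ∂_{x_i}∂_{x_j}(D_{ij} q). -/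
open MeasureTheory

/-- Partial derivative in the `i`-th coordinate direction. -/
noncomputable def pd {d : ℕ} (i : Fin d) (g : (Fin d → ℝ) → ℝ) : (Fin d → ℝ) → ℝ :=
  fun x => fderiv ℝ g x (Pi.single i 1)

/-- The Fokker-Planck operator `ℒq = -∑ᵢ ∂ᵢ(fᵢ q) + (1/2) ∑ᵢⱼ ∂ᵢ∂ⱼ(Dᵢⱼ q)`. -/
noncomputable def fokkerPlanck {d : ℕ} (f : (Fin d → ℝ) → Fin d → ℝ)
    (D : (Fin d → ℝ) → Fin d → Fin d → ℝ) (q : (Fin d → ℝ) → ℝ) : (Fin d → ℝ) → ℝ :=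
  fun x => -(∑ i, pd i (fun y => f y i * q y) x)
    + (1 / 2) * ∑ i, ∑ j, pd i (pd j (fun y => D y i j * q y)) x

/-- The vector field `bᵢ = (1/2) ∑ⱼ ∂ⱼ Dᵢⱼ - fᵢ`. -/
noncomputable def bvec {d : ℕ} (f : (Fin d → ℝ) → Fin d → ℝ)
    (D : (Fin d → ℝ) → Fin d → Fin d → ℝ) : (Fin d → ℝ) → Fin d → ℝ :=
  fun x i => (1 / 2) * ∑ j, pd j (fun y => D y i j) x - f x i

/-- The divergence `∇·b = ∑ᵢ ∂ᵢ bᵢ` of the vector field `b`. -/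
noncomputable def divb {d : ℕ} (f : (Fin d → ℝ) → Fin d → ℝ)
    (D : (Fin d → ℝ) → Fin d → Fin d → ℝ) : (Fin d → ℝ) → ℝ :=
  fun x => ∑ i, pd i (fun y => bvec f D y i) x

/-!
Since `q` is supported in `Ω`, every integral may be taken over the whole space, where
integration by parts produces no boundary terms. Writing `ℒq = ∇·(b q) + ½ ∑ᵢⱼ ∂ᵢ(Dᵢⱼ ∂ⱼq)` and
integrating against `q` gives `∫ q ℒq = ½ ∫ (∇·b) q² - ½ ∫ ∇q·D∇q`. Ellipticity and the Poincaré
inequality bound `∫ ∇q·D∇q` below by `(C_D/C_P) ∫ q²`, so the gap condition yields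
`-∫ q ℒq ≥ (C₀/2) ∫ q²`. Since `-q ℒq ≤ (C₀/4) q² + (ℒq)²/C₀` pointwise, this gives
`(C₀/4) ∫ q² ≤ (1/C₀) ∫ (ℒq)²`.
-/

variable {d : ℕ}

section PartialDerivative

variable {g u v : (Fin d → ℝ) → ℝ} (i : Fin d)

@[fun_prop]
theorem contDiff_pd {n : ℕ} (hg : ContDiff ℝ (n + 1) g) : ContDiff ℝ n (pd i g) :=
  (hg.fderiv_right le_rfl).clm_apply contDiff_const

@[fun_prop]
theorem continuous_pd (hg : ContDiff ℝ 1 g) : Continuous (pd i g) :=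
  (hg.continuous_fderiv one_ne_zero).clm_apply continuous_const

theorem tsupport_pd_subset : tsupport (pd i g) ⊆ tsupport g :=
  (tsupport_comp_subset (g := fun L : (Fin d → ℝ) →L[ℝ] ℝ => L (Pi.single i 1)) rfl _).trans
    (tsupport_fderiv_subset ℝ)

theorem pd_eq_zero_of_notMem_tsupport {x : Fin d → ℝ} (hx : x ∉ tsupport g) : pd i g x = 0 :=
  image_eq_zero_of_notMem_tsupport fun h => hx (tsupport_pd_subset i h)

theorem HasCompactSupport.pd (hg : HasCompactSupport g) : HasCompactSupport (pd i g) :=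
  hg.mono' ((subset_tsupport _).trans (tsupport_pd_subset i))

variable {i} {x : Fin d → ℝ}

theorem pd_mul (hu : DifferentiableAt ℝ u x) (hv : DifferentiableAt ℝ v x) :
    pd i (fun y => u y * v y) x = pd i u x * v x + u x * pd i v x := by
  simp [pd, fderiv_fun_mul hu hv]; ring

theorem pd_add (hu : DifferentiableAt ℝ u x) (hv : DifferentiableAt ℝ v x) :
    pd i (fun y => u y + v y) x = pd i u x + pd i v x := by
  simp [pd, fderiv_fun_add hu hv]

theorem pd_sub (hu : DifferentiableAt ℝ u x) (hv : DifferentiableAt ℝ v x) :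
    pd i (fun y => u y - v y) x = pd i u x - pd i v x := by
  simp [pd, fderiv_fun_sub hu hv]

theorem pd_const_mul (c : ℝ) (hu : DifferentiableAt ℝ u x) :
    pd i (fun y => c * u y) x = c * pd i u x := by
  simp [pd, fderiv_const_mul hu]

theorem pd_sum {ι : Type*} {s : Finset ι} {w : ι → (Fin d → ℝ) → ℝ}
    (hw : ∀ k ∈ s, DifferentiableAt ℝ (w k) x) :
    pd i (fun y => ∑ k ∈ s, w k y) x = ∑ k ∈ s, pd i (w k) x := by
  simp [pd, fderiv_fun_sum hw]

theorem pd_pd_mul (j : Fin d) (hu : ContDiff ℝ 2 u) (hv : ContDiff ℝ 2 v) :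
    pd i (pd j fun y => u y * v y) x
      = pd i (fun y => pd j u y * v y) x + pd i (fun y => u y * pd j v y) x := by
  have hu1 : ContDiff ℝ 1 u := hu.of_le (by norm_num)
  have hv1 : ContDiff ℝ 1 v := hv.of_le (by norm_num)
  have hprod : pd j (fun y => u y * v y) = fun y => pd j u y * v y + u y * pd j v y :=
    funext fun y => pd_mul (hu1.differentiable one_ne_zero y) (hv1.differentiable one_ne_zero y)
  have hfst : ContDiff ℝ 1 fun y => pd j u y * v y := by fun_prop (disch := norm_num)
  have hsnd : ContDiff ℝ 1 fun y => u y * pd j v y := by fun_prop (disch := norm_num)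
  rw [hprod, pd_add (hfst.differentiable one_ne_zero x) (hsnd.differentiable one_ne_zero x)]

end PartialDerivative

section Integration

variable {u v q B : (Fin d → ℝ) → ℝ} (i : Fin d)

theorem Continuous.integrable_of_forall_notMem_tsupport (hu : Continuous u)
    (hq : HasCompactSupport q) (h : ∀ x ∉ tsupport q, u x = 0) : Integrable u :=
  hu.integrable_of_hasCompactSupport (hq.mono' (Function.support_subset_iff'.mpr h))

theorem integral_mul_pd_eq_neg (hu : ContDiff ℝ 1 u) (hv : ContDiff ℝ 1 v)
    (hcs : HasCompactSupport u) :
    ∫ x, u x * pd i v x = -∫ x, pd i u x * v x :=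
  integral_mul_fderiv_eq_neg_fderiv_mul_of_integrable
    (((continuous_pd i hu).mul hv.continuous).integrable_of_hasCompactSupport
      (hcs.pd i).mul_right)
    ((hu.continuous.mul (continuous_pd i hv)).integrable_of_hasCompactSupport hcs.mul_right)
    ((hu.continuous.mul hv.continuous).integrable_of_hasCompactSupport hcs.mul_right)
    (fun x _ => hu.differentiable one_ne_zero x) (fun x _ => hv.differentiable one_ne_zero x)

theorem integral_mul_pd_mul_self (hq : ContDiff ℝ 1 q) (hB : ContDiff ℝ 1 B)
    (hcs : HasCompactSupport q) :
    ∫ x, q x * pd i (fun y => B y * q y) x = 1 / 2 * ∫ x, pd i B x * q x ^ 2 := by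
  have hibp := integral_mul_pd_eq_neg i hq (hB.mul hq) hcs
  have hprod : (fun x => q x * pd i (fun y => B y * q y) x)
      = fun x => pd i B x * q x ^ 2 + pd i q x * (B x * q x) := by
    ext x
    rw [pd_mul (hB.differentiable one_ne_zero x) (hq.differentiable one_ne_zero x)]
    ring
  have hvanish : ∀ x ∉ tsupport q, q x = 0 := fun _ => image_eq_zero_of_notMem_tsupport
  have hint₁ : Integrable fun x => pd i B x * q x ^ 2 :=
    Continuous.integrable_of_forall_notMem_tsupport (by fun_prop) hcs
      fun x hx => by simp [hvanish x hx]
  have hint₂ : Integrable fun x => pd i q x * (B x * q x) :=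
    Continuous.integrable_of_forall_notMem_tsupport (by fun_prop) hcs
      fun x hx => by simp [hvanish x hx]
  rw [hprod, integral_add hint₁ hint₂] at hibp ⊢
  linarith

end Integration

theorem neg_integral_mul_le {α : Type*} [MeasurableSpace α] {μ : Measure α} {u v : α → ℝ}
    (hu : Integrable (fun x => u x ^ 2) μ) (hv : Integrable (fun x => v x ^ 2) μ)
    (huv : Integrable (fun x => u x * v x) μ) {c : ℝ} (hc : 0 < c) :
    -∫ x, u x * v x ∂μ ≤ c / 4 * ∫ x, u x ^ 2 ∂μ + 1 / c * ∫ x, v x ^ 2 ∂μ := by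
  rw [← integral_neg, ← integral_const_mul, ← integral_const_mul,
    ← integral_add (hu.const_mul _) (hv.const_mul _)]
  refine integral_mono huv.neg ((hu.const_mul _).add (hv.const_mul _)) fun x => ?_
  have hsq : 0 ≤ (c * u x + 2 * v x) ^ 2 / (4 * c) := by positivity
  have hexpand : (c * u x + 2 * v x) ^ 2 / (4 * c)
      = c / 4 * u x ^ 2 + 1 / c * v x ^ 2 + u x * v x := by
    field_simp; ring
  linarith

theorem sq_mul_integral_sq_le_of_le_neg_integral_mul {α : Type*} [MeasurableSpace α]
    {μ : Measure α} {u v : α → ℝ} (hu : Integrable (fun x => u x ^ 2) μ)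
    (hv : Integrable (fun x => v x ^ 2) μ) (huv : Integrable (fun x => u x * v x) μ) {c : ℝ}
    (hc : 0 < c) (hcoercive : c / 2 * ∫ x, u x ^ 2 ∂μ ≤ -∫ x, u x * v x ∂μ) :
    c ^ 2 * ∫ x, u x ^ 2 ∂μ ≤ 4 * ∫ x, v x ^ 2 ∂μ := by
  have hamgm := neg_integral_mul_le hu hv huv hc
  calc c ^ 2 * ∫ x, u x ^ 2 ∂μ = 4 * c * (c / 4 * ∫ x, u x ^ 2 ∂μ) := by ring
    _ ≤ 4 * c * (1 / c * ∫ x, v x ^ 2 ∂μ) :=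
      mul_le_mul_of_nonneg_left (by linarith) (by positivity)
    _ = 4 * ∫ x, v x ^ 2 ∂μ := by field_simp

section FokkerPlanck

variable {q : (Fin d → ℝ) → ℝ} {f : (Fin d → ℝ) → Fin d → ℝ}
  {D : (Fin d → ℝ) → Fin d → Fin d → ℝ}

@[fun_prop]
theorem contDiff_bvec (hf : ContDiff ℝ 1 f) (hD : ContDiff ℝ 2 D) (i : Fin d) :
    ContDiff ℝ 1 fun y => bvec f D y i := by
  unfold bvec; fun_prop (disch := norm_num)

@[fun_prop]
theorem continuous_divb (hf : ContDiff ℝ 1 f) (hD : ContDiff ℝ 2 D) : Continuous (divb f D) := by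
  unfold divb; fun_prop

@[fun_prop]
theorem continuous_fokkerPlanck (hq : ContDiff ℝ 2 q) (hf : ContDiff ℝ 1 f)
    (hD : ContDiff ℝ 2 D) : Continuous (fokkerPlanck f D q) := by
  unfold fokkerPlanck; fun_prop (disch := norm_num)

theorem support_fokkerPlanck_subset : Function.support (fokkerPlanck f D q) ⊆ tsupport q := by
  refine Function.support_subset_iff'.mpr fun x hx => ?_
  have hdrift : ∀ i, pd i (fun y => f y i * q y) x = 0 := fun i =>
    pd_eq_zero_of_notMem_tsupport i fun h => hx (tsupport_mul_subset_right h)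
  have hdiffusion : ∀ i j, pd i (pd j fun y => D y i j * q y) x = 0 := fun i j =>
    pd_eq_zero_of_notMem_tsupport i fun h => hx (tsupport_mul_subset_right (tsupport_pd_subset j h))
  simp [fokkerPlanck, hdrift, hdiffusion]

theorem fokkerPlanck_eq_divergence_form (hq : ContDiff ℝ 2 q) (hf : ContDiff ℝ 1 f)
    (hD : ContDiff ℝ 2 D) (x : Fin d → ℝ) :
    fokkerPlanck f D q x = ∑ i, pd i (fun y => bvec f D y i * q y) x
      + 1 / 2 * ∑ i, ∑ j, pd i (fun y => D y i j * pd j q y) x := by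
  have hDij : ∀ i j, ContDiff ℝ 2 fun y => D y i j := fun i j => by fun_prop
  have hsecond : ∀ i j, pd i (pd j fun y => D y i j * q y) x
      = pd i (fun y => pd j (fun z => D z i j) y * q y) x + pd i (fun y => D y i j * pd j q y) x :=
    fun i j => pd_pd_mul j (hDij i j) hq
  have hfirst : ∀ i, pd i (fun y => bvec f D y i * q y) x
      = 1 / 2 * ∑ j, pd i (fun y => pd j (fun z => D z i j) y * q y) x
        - pd i (fun y => f y i * q y) x := by
    intro i
    have hexpand : (fun y => bvec f D y i * q y)
        = fun y => 1 / 2 * ∑ j, pd j (fun z => D z i j) y * q y - f y i * q y := by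
      ext y; simp only [bvec, sub_mul, mul_assoc, Finset.sum_mul]
    have hterm : ∀ j, ContDiff ℝ 1 fun y => pd j (fun z => D z i j) y * q y := fun j => by
      fun_prop (disch := norm_num)
    have hsum : ContDiff ℝ 1 fun y => ∑ j, pd j (fun z => D z i j) y * q y :=
      ContDiff.sum fun j _ => hterm j
    have hfq : ContDiff ℝ 1 fun y => f y i * q y := by fun_prop (disch := norm_num)
    rw [hexpand, pd_sub ((hsum.differentiable one_ne_zero x).const_mul _)
      (hfq.differentiable one_ne_zero x), pd_const_mul _ (hsum.differentiable one_ne_zero x),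
      pd_sum fun j _ => (hterm j).differentiable one_ne_zero x]
  simp only [fokkerPlanck, hsecond, hfirst, Finset.sum_add_distrib, Finset.sum_sub_distrib,
    ← Finset.mul_sum]
  ring

theorem integral_divb_mul_sq (hq : Continuous q) (hf : ContDiff ℝ 1 f) (hD : ContDiff ℝ 2 D)
    (hcs : HasCompactSupport q) :
    ∫ x, divb f D x * q x ^ 2 = ∑ i, ∫ x, pd i (fun y => bvec f D y i) x * q x ^ 2 := by
  have hq0 : ∀ x ∉ tsupport q, q x = 0 := fun _ => image_eq_zero_of_notMem_tsupport
  rw [← integral_finsetSum _ fun i _ => Continuous.integrable_of_forall_notMem_tsupport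
    (by fun_prop) hcs fun x hx => by simp [hq0 x hx]]
  simp only [divb, Finset.sum_mul]

theorem integral_mul_fokkerPlanck (hq : ContDiff ℝ 2 q) (hf : ContDiff ℝ 1 f)
    (hD : ContDiff ℝ 2 D) (hcs : HasCompactSupport q) :
    ∫ x, q x * fokkerPlanck f D q x
      = 1 / 2 * (∫ x, divb f D x * q x ^ 2)
        - 1 / 2 * ∫ x, ∑ i, ∑ j, D x i j * pd i q x * pd j q x := by
  have hq1 : ContDiff ℝ 1 q := hq.of_le (by norm_num)
  have hDc : Continuous D := hD.continuous
  have hq0 : ∀ x ∉ tsupport q, q x = 0 := fun _ => image_eq_zero_of_notMem_tsupport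
  have hdrift : ∀ i, Integrable fun x => q x * pd i (fun y => bvec f D y i * q y) x := fun i =>
    Continuous.integrable_of_forall_notMem_tsupport (by fun_prop) hcs
      fun x hx => by simp [hq0 x hx]
  have hdiffusion : ∀ i j, Integrable fun x => q x * pd i (fun y => D y i j * pd j q y) x :=
    fun i j => Continuous.integrable_of_forall_notMem_tsupport
      (by fun_prop (disch := norm_num)) hcs fun x hx => by simp [hq0 x hx]
  have hquad : ∀ i j, Integrable fun x => D x i j * pd i q x * pd j q x := fun i j =>
    Continuous.integrable_of_forall_notMem_tsupport (by fun_prop) hcs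
      fun x hx => by simp [pd_eq_zero_of_notMem_tsupport i hx]
  have hpointwise : (fun x => q x * fokkerPlanck f D q x)
      = fun x => ∑ i, q x * pd i (fun y => bvec f D y i * q y) x
        + 1 / 2 * ∑ i, ∑ j, q x * pd i (fun y => D y i j * pd j q y) x := by
    ext x
    rw [fokkerPlanck_eq_divergence_form hq hf hD]
    simp only [mul_add, Finset.mul_sum, mul_left_comm (q x)]
  have hdrift_eq : ∀ i, ∫ x, q x * pd i (fun y => bvec f D y i * q y) x
      = 1 / 2 * ∫ x, pd i (fun y => bvec f D y i) x * q x ^ 2 := fun i =>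
    integral_mul_pd_mul_self i hq1 (contDiff_bvec hf hD i) hcs
  have hdiffusion_eq : ∀ i j, ∫ x, q x * pd i (fun y => D y i j * pd j q y) x
      = -∫ x, D x i j * pd i q x * pd j q x := fun i j => by
    rw [integral_mul_pd_eq_neg i hq1 (by fun_prop (disch := norm_num)) hcs]
    simp only [mul_left_comm, mul_assoc]
  have hdiffusion_sum : ∀ i, Integrable fun x =>
      ∑ j, q x * pd i (fun y => D y i j * pd j q y) x := fun i =>
    integrable_finsetSum _ fun j _ => hdiffusion i j
  have hquad_sum : ∀ i, Integrable fun x => ∑ j, D x i j * pd i q x * pd j q x := fun i =>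
    integrable_finsetSum _ fun j _ => hquad i j
  rw [integral_divb_mul_sq hq.continuous hf hD hcs, hpointwise,
    integral_add (integrable_finsetSum _ fun i _ => hdrift i)
      ((integrable_finsetSum _ fun i _ => hdiffusion_sum i).const_mul _),
    integral_const_mul, integral_finsetSum _ fun i _ => hdrift i,
    integral_finsetSum _ fun i _ => hdiffusion_sum i, integral_finsetSum _ fun i _ => hquad_sum i]
  simp only [integral_finsetSum _ fun j _ => hdiffusion _ j,
    integral_finsetSum _ fun j _ => hquad _ j, hdrift_eq, hdiffusion_eq, Finset.sum_neg_distrib]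
  rw [← Finset.mul_sum]
  ring

end FokkerPlanck

section Estimates

variable {q : (Fin d → ℝ) → ℝ} {s : Set (Fin d → ℝ)}

theorem integral_mono_of_le_on_tsupport {u w : (Fin d → ℝ) → ℝ} (hu : Continuous u)
    (hw : Continuous w) (hcs : HasCompactSupport q) (hu0 : ∀ x ∉ tsupport q, u x = 0)
    (hw0 : ∀ x ∉ tsupport q, w x = 0) (h : ∀ x ∈ tsupport q, u x ≤ w x) :
    ∫ x, u x ≤ ∫ x, w x := by
  refine integral_mono (hu.integrable_of_forall_notMem_tsupport hcs hu0)
    (hw.integrable_of_forall_notMem_tsupport hcs hw0) fun x => ?_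
  by_cases hx : x ∈ tsupport q
  · exact h x hx
  · simp [hu0 x hx, hw0 x hx]

theorem mul_integral_sum_sq_pd_le {D : (Fin d → ℝ) → Fin d → Fin d → ℝ} {C : ℝ}
    (hq : ContDiff ℝ 1 q) (hcs : HasCompactSupport q) (hqs : tsupport q ⊆ s)
    (hD : Continuous D)
    (hell : ∀ x ∈ s, ∀ ξ : Fin d → ℝ, C * ∑ i, ξ i ^ 2 ≤ ∑ i, ∑ j, D x i j * ξ i * ξ j) :
    C * ∫ x, ∑ i, pd i q x ^ 2 ≤ ∫ x, ∑ i, ∑ j, D x i j * pd i q x * pd j q x := by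
  have hpd0 : ∀ x ∉ tsupport q, ∀ i, pd i q x = 0 := fun x hx i =>
    pd_eq_zero_of_notMem_tsupport i hx
  rw [← integral_const_mul]
  exact integral_mono_of_le_on_tsupport (by fun_prop) (by fun_prop) hcs
    (fun x hx => by simp [hpd0 x hx]) (fun x hx => by simp [hpd0 x hx])
    fun x hx => hell x (hqs hx) fun i => pd i q x

theorem mul_integral_sq_le {w : (Fin d → ℝ) → ℝ} {c : ℝ} (hq : Continuous q) (hw : Continuous w)
    (hcs : HasCompactSupport q) (hqs : tsupport q ⊆ s) (hcw : ∀ x ∈ s, c ≤ w x) :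
    c * ∫ x, q x ^ 2 ≤ ∫ x, w x * q x ^ 2 := by
  have hq0 : ∀ x ∉ tsupport q, q x = 0 := fun _ => image_eq_zero_of_notMem_tsupport
  rw [← integral_const_mul]
  exact integral_mono_of_le_on_tsupport (by fun_prop) (by fun_prop) hcs
    (fun x hx => by simp [hq0 x hx]) (fun x hx => by simp [hq0 x hx])
    fun x hx => mul_le_mul_of_nonneg_right (hcw x (hqs hx)) (sq_nonneg _)

theorem half_mul_integral_sq_le_neg_integral_mul_fokkerPlanck
    {f : (Fin d → ℝ) → Fin d → ℝ} {D : (Fin d → ℝ) → Fin d → Fin d → ℝ} {C_D C_P C₀ : ℝ}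
    (hq : ContDiff ℝ 2 q) (hcs : HasCompactSupport q) (hqs : tsupport q ⊆ s)
    (hf : ContDiff ℝ 1 f) (hD : ContDiff ℝ 2 D) (hCD : 0 < C_D) (hCP : 0 < C_P)
    (hell : ∀ x ∈ s, ∀ ξ : Fin d → ℝ, C_D * ∑ i, ξ i ^ 2 ≤ ∑ i, ∑ j, D x i j * ξ i * ξ j)
    (hpoincare : ∫ x, q x ^ 2 ≤ C_P * ∫ x, ∑ i, pd i q x ^ 2)
    (hgap : ∀ x ∈ s, C₀ ≤ C_D / C_P - divb f D x) :
    C₀ / 2 * ∫ x, q x ^ 2 ≤ -∫ x, q x * fokkerPlanck f D q x := by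
  have hq1 : ContDiff ℝ 1 q := hq.of_le (by norm_num)
  have hq0 : ∀ x ∉ tsupport q, q x = 0 := fun _ => image_eq_zero_of_notMem_tsupport
  have hquadratic : C_D / C_P * ∫ x, q x ^ 2 ≤ ∫ x, ∑ i, ∑ j, D x i j * pd i q x * pd j q x :=
    calc C_D / C_P * ∫ x, q x ^ 2
        ≤ C_D / C_P * (C_P * ∫ x, ∑ i, pd i q x ^ 2) := by gcongr
      _ = C_D * ∫ x, ∑ i, pd i q x ^ 2 := by field_simp
      _ ≤ _ := mul_integral_sum_sq_pd_le hq1 hcs hqs hD.continuous hell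
  have hgap' : C₀ * ∫ x, q x ^ 2 ≤ C_D / C_P * (∫ x, q x ^ 2) - ∫ x, divb f D x * q x ^ 2 := by
    have hint {u : (Fin d → ℝ) → ℝ} (hu : Continuous u) : Integrable fun x => u x * q x ^ 2 :=
      (hu.mul (hq1.continuous.pow 2)).integrable_of_forall_notMem_tsupport hcs
        fun x hx => by simp [hq0 x hx]
    calc C₀ * ∫ x, q x ^ 2
        ≤ ∫ x, (C_D / C_P - divb f D x) * q x ^ 2 :=
          mul_integral_sq_le hq1.continuous (by fun_prop) hcs hqs hgap
      _ = C_D / C_P * (∫ x, q x ^ 2) - ∫ x, divb f D x * q x ^ 2 := by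
          simp only [sub_mul]
          rw [integral_sub (hint continuous_const) (hint (continuous_divb hf hD)),
            integral_const_mul]
  linarith [integral_mul_fokkerPlanck hq hf hD hcs]

end Estimates

theorem stmt_0_general {d : ℕ}
    (Ω : Set (Fin d → ℝ))
    (q : (Fin d → ℝ) → ℝ) (hq : ContDiff ℝ 2 q)
    (hqsupp : HasCompactSupport q) (hqΩ : tsupport q ⊆ Ω)
    (f : (Fin d → ℝ) → Fin d → ℝ) (hf : ContDiff ℝ 1 f)
    (D : (Fin d → ℝ) → Fin d → Fin d → ℝ) (hD : ContDiff ℝ 2 D)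
    (C_D : ℝ) (hCD : 0 < C_D)
    (hell : ∀ x ∈ Ω, ∀ ξ : Fin d → ℝ,
      C_D * ∑ i, (ξ i) ^ 2 ≤ ∑ i, ∑ j, D x i j * ξ i * ξ j)
    (C_P : ℝ) (hCP : 0 < C_P)
    (hpoincare : ∀ u : (Fin d → ℝ) → ℝ, ContDiff ℝ 1 u → HasCompactSupport u →
      tsupport u ⊆ Ω → ∫ x in Ω, (u x) ^ 2 ≤ C_P * ∫ x in Ω, ∑ i, (pd i u x) ^ 2)
    (C₀ : ℝ) (hC0 : 0 < C₀)
    (hgap : ∀ x ∈ Ω, C₀ ≤ C_D / C_P - divb f D x) :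
    C₀ ^ 2 * ∫ x in Ω, (q x) ^ 2 ≤ 4 * ∫ x in Ω, (fokkerPlanck f D q x) ^ 2 := by
  set L := fokkerPlanck f D q
  have hq1 : ContDiff ℝ 1 q := hq.of_le (by norm_num)
  have hq0 : ∀ x ∉ tsupport q, q x = 0 := fun _ => image_eq_zero_of_notMem_tsupport
  have hL0 : ∀ x ∉ tsupport q, L x = 0 := fun _ hx =>
    Function.notMem_support.mp fun h => hx (support_fokkerPlanck_subset h)
  have hintegral_Ω {u : (Fin d → ℝ) → ℝ} (hu : ∀ x ∉ tsupport q, u x = 0) :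
      ∫ x in Ω, u x = ∫ x, u x :=
    setIntegral_eq_integral_of_forall_compl_eq_zero fun x hx => hu x fun h => hx (hqΩ h)
  have hpoincare' := hpoincare q hq1 hqsupp hqΩ
  rw [hintegral_Ω fun x hx => by simp [hq0 x hx], hintegral_Ω fun x hx => by
    simp [pd_eq_zero_of_notMem_tsupport _ hx]] at hpoincare'
  rw [hintegral_Ω fun x hx => by simp [hq0 x hx], hintegral_Ω fun x hx => by simp [hL0 x hx]]
  have hL : Continuous L := continuous_fokkerPlanck hq hf hD
  exact sq_mul_integral_sq_le_of_le_neg_integral_mul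
    ((hq1.continuous.pow 2).integrable_of_forall_notMem_tsupport hqsupp
      fun x hx => by simp [hq0 x hx])
    ((hL.pow 2).integrable_of_forall_notMem_tsupport hqsupp fun x hx => by simp [hL0 x hx])
    ((hq1.continuous.mul hL).integrable_of_forall_notMem_tsupport hqsupp
      fun x hx => by simp [hq0 x hx]) hC0
    (half_mul_integral_sq_le_neg_integral_mul_fokkerPlanck hq hqsupp hqΩ hf hD hCD hCP hell
      hpoincare' hgap)

/-- Stability of the steady-state Fokker-Planck operator:
`C₀² ∫_Ω q² ≤ 4 ∫_Ω (ℒq)²`. -/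
theorem stmt_0 {d : ℕ} (hd : 1 ≤ d)
    (Ω : Set (Fin d → ℝ)) (hΩopen : IsOpen Ω) (hΩbdd : Bornology.IsBounded Ω)
    (q : (Fin d → ℝ) → ℝ) (hq : ContDiff ℝ 2 q)
    (hqsupp : HasCompactSupport q) (hqΩ : tsupport q ⊆ Ω)
    (f : (Fin d → ℝ) → Fin d → ℝ) (hf : ContDiff ℝ 1 f)
    (D : (Fin d → ℝ) → Fin d → Fin d → ℝ) (hD : ContDiff ℝ 2 D)
    (C_D : ℝ) (hCD : 0 < C_D)
    (hell : ∀ x ∈ Ω, ∀ ξ : Fin d → ℝ,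
      C_D * ∑ i, (ξ i) ^ 2 ≤ ∑ i, ∑ j, D x i j * ξ i * ξ j)
    (C_P : ℝ) (hCP : 0 < C_P)
    (hpoincare : ∀ u : (Fin d → ℝ) → ℝ, ContDiff ℝ 1 u → HasCompactSupport u →
      tsupport u ⊆ Ω → ∫ x in Ω, (u x) ^ 2 ≤ C_P * ∫ x in Ω, ∑ i, (pd i u x) ^ 2)
    (C₀ : ℝ) (hC0 : 0 < C₀)
    (hgap : ∀ x ∈ Ω, C₀ ≤ C_D / C_P - divb f D x) :
    C₀ ^ 2 * ∫ x in Ω, (q x) ^ 2 ≤ 4 * ∫ x in Ω, (fokkerPlanck f D q x) ^ 2 :=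
  stmt_0_general Ω q hq hqsupp hqΩ f hf D hD C_D hCD hell C_P hCP hpoincare C₀ hC0 hgap
end

section
/- Let d ≥ 1 and let p : ℝ^d → ℝ be a continuous integrable function whose Fourier transform is integrable. Then for every x ∈ ℝ^d, lim_{R→∞} (2π)^{−d} ∫_{ℝ^d} ( ∫_{[-R,R]^d} cos( z·(x − y) ) dz ) p(y) dy = p(x). -/
/-!
Integrating the kernel against `p` and swapping the two integrals (Fubini; the cube has finite
measure) turns the `y`-integral into `p̂`, so the expression equals
`(2π)^{-d} Re ∫_{[-R,R]^d} e^{i z·x} p̂(z) dz`. Since `p̂` is integrable, this tends to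
`(2π)^{-d} ∫ e^{i z·x} p̂(z) dz` as `R → ∞`, which is `p(x)` by Fourier inversion. Mathlib's
inversion theorem lives on `EuclideanSpace` and uses the kernel `e^{-2πi⟪v, w⟫}`; the substitution
`ξ = 2π w` transports it to the present convention.
-/

open MeasureTheory Filter Real FourierTransform
open scoped Matrix

section

variable {ι : Type*} [Fintype ι]

noncomputable def fourierPi (f : (ι → ℝ) → ℂ) (ξ : ι → ℝ) : ℂ :=
  ∫ y, Complex.exp (-Complex.I * (ξ ⬝ᵥ y : ℝ)) * f y

lemma integral_comp_ofLp {E : Type*} [NormedAddCommGroup E] [NormedSpace ℝ E]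
    (g : (ι → ℝ) → E) :
    ∫ v : EuclideanSpace ℝ ι, g (WithLp.ofLp v) = ∫ y, g y :=
  (EuclideanSpace.volume_preserving_symm_measurableEquiv_toLp ι).integral_comp' g

lemma integrable_comp_ofLp_iff {E : Type*} [NormedAddCommGroup E] {g : (ι → ℝ) → E} :
    Integrable (g ∘ WithLp.ofLp : EuclideanSpace ℝ ι → E) ↔ Integrable g :=
  (EuclideanSpace.volume_preserving_symm_measurableEquiv_toLp ι).integrable_comp_emb
    (MeasurableEquiv.toLp 2 (ι → ℝ)).symm.measurableEmbedding

lemma fourier_comp_ofLp (f : (ι → ℝ) → ℂ) (w : EuclideanSpace ℝ ι) :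
    𝓕 (f ∘ WithLp.ofLp : EuclideanSpace ℝ ι → ℂ) w = fourierPi f ((2 * π) • WithLp.ofLp w) := by
  rw [Real.fourier_eq', fourierPi, ← integral_comp_ofLp]
  congr 1 with v
  simp only [EuclideanSpace.inner_eq_star_dotProduct, star_trivial, smul_dotProduct, smul_eq_mul,
    Function.comp_apply, dotProduct_comm (WithLp.ofLp w)]
  congr 2
  push_cast
  ring

lemma fourierInv_comp_smul_ofLp (g : (ι → ℝ) → ℂ) (x : ι → ℝ) :
    𝓕⁻ (fun w : EuclideanSpace ℝ ι => g ((2 * π) • WithLp.ofLp w)) (WithLp.toLp 2 x) =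
      ((2 * π) ^ Fintype.card ι)⁻¹ • ∫ ξ, Complex.exp (Complex.I * (ξ ⬝ᵥ x : ℝ)) * g ξ := by
  set G : (ι → ℝ) → ℂ := fun ξ => Complex.exp (Complex.I * (ξ ⬝ᵥ x : ℝ)) * g ξ
  calc 𝓕⁻ (fun w : EuclideanSpace ℝ ι => g ((2 * π) • WithLp.ofLp w)) (WithLp.toLp 2 x)
      = ∫ v : EuclideanSpace ℝ ι, G ((2 * π) • WithLp.ofLp v) := by
        rw [Real.fourierInv_eq']
        congr 1 with v
        simp only [G, EuclideanSpace.inner_eq_star_dotProduct, star_trivial, smul_dotProduct,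
          smul_eq_mul, dotProduct_comm x]
        congr 2
        push_cast
        ring
    _ = ∫ ξ, G ((2 * π) • ξ) := integral_comp_ofLp fun ξ => G ((2 * π) • ξ)
    _ = _ := by
        rw [Measure.integral_comp_smul, Module.finrank_fintype_fun_eq_card,
          abs_of_nonneg (by positivity)]

theorem integral_exp_mul_fourierPi {f : (ι → ℝ) → ℂ} (hfc : Continuous f) (hfi : Integrable f)
    (hFi : Integrable (fourierPi f)) (x : ι → ℝ) :
    ∫ ξ, Complex.exp (Complex.I * (ξ ⬝ᵥ x : ℝ)) * fourierPi f ξ =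
      (2 * π) ^ Fintype.card ι • f x := by
  set q : EuclideanSpace ℝ ι → ℂ := f ∘ WithLp.ofLp
  have hq : 𝓕 q = fun w => fourierPi f ((2 * π) • WithLp.ofLp w) := funext (fourier_comp_ofLp f)
  have hFqi : Integrable (𝓕 q) := by
    rw [hq]
    exact integrable_comp_ofLp_iff.2
      ((integrable_comp_smul_iff volume (fourierPi f) (by positivity)).2 hFi)
  have hinv := (integrable_comp_ofLp_iff.2 hfi).fourierInv_fourier_eq hFqi
    (hfc.comp (PiLp.continuous_ofLp 2 _)).continuousAt (v := WithLp.toLp 2 x)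
  rw [hq, fourierInv_comp_smul_ofLp] at hinv
  rw [← inv_smul_eq_iff₀ (by positivity), hinv]
  rfl

lemma MeasureTheory.Integrable.exp_I_mul_mul {α : Type*} [MeasurableSpace α] {μ : Measure α}
    {θ : α → ℝ} (hθ : Measurable θ) {g : α → ℂ} (hg : Integrable g μ) :
    Integrable (fun a => Complex.exp (Complex.I * θ a) * g a) μ :=
  hg.bdd_mul (c := 1) (by fun_prop) (ae_of_all _ fun a => (Complex.norm_exp_I_mul_ofReal _).le)

lemma integral_exp_mul_fourierPi_eq_integral_integral {ν : Measure (ι → ℝ)} [IsFiniteMeasure ν]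
    {f : (ι → ℝ) → ℂ} (hf : Integrable f) (x : ι → ℝ) :
    ∫ z, Complex.exp (Complex.I * (z ⬝ᵥ x : ℝ)) * fourierPi f z ∂ν =
      ∫ y, ∫ z, Complex.exp (Complex.I * (z ⬝ᵥ (x - y) : ℝ)) * f y ∂ν := by
  refine Eq.trans ?_ (integral_integral_swap ((hf.comp_snd ν).exp_I_mul_mul (by fun_prop)))
  refine integral_congr_ae (ae_of_all _ fun z => ?_)
  simp only [fourierPi, ← integral_const_mul, ← mul_assoc, ← Complex.exp_add, dotProduct_sub]
  push_cast
  ring_nf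

lemma re_integral_exp_mul_fourierPi {ν : Measure (ι → ℝ)} [IsFiniteMeasure ν]
    {p : (ι → ℝ) → ℝ} (hp : Integrable p) (x : ι → ℝ) :
    (∫ z, Complex.exp (Complex.I * (z ⬝ᵥ x : ℝ)) * fourierPi (fun y => (p y : ℂ)) z ∂ν).re =
      ∫ y, (∫ z, Real.cos (z ⬝ᵥ (x - y)) ∂ν) * p y := by
  have hpC : Integrable (fun y => (p y : ℂ)) := hp.ofReal
  have hF := hpC.comp_snd ν |>.exp_I_mul_mul
    (θ := fun zy : (ι → ℝ) × (ι → ℝ) => zy.1 ⬝ᵥ (x - zy.2)) (by fun_prop)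
  rw [integral_exp_mul_fourierPi_eq_integral_integral hpC, ← RCLike.re_eq_complex_re,
    ← integral_re hF.integral_prod_right]
  refine integral_congr_ae (ae_of_all _ fun y => ?_)
  dsimp only
  rw [← integral_re ((integrable_const _).exp_I_mul_mul (by fun_prop)), ← integral_mul_const]
  congr 1 with z
  rw [RCLike.re_eq_complex_re, Complex.re_mul_ofReal, mul_comm Complex.I,
    Complex.exp_ofReal_mul_I_re]

lemma aecover_univ_pi_Icc (μ : Measure (ι → ℝ)) :
    AECover μ atTop fun R : ℝ => Set.univ.pi fun _ : ι => Set.Icc (-R) R where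
  ae_eventually_mem := ae_of_all _ fun z => by
    filter_upwards [eventually_ge_atTop ‖z‖] with R hR j _
    exact abs_le.mp ((norm_le_pi_norm z j).trans hR)
  measurableSet _ := .univ_pi fun _ => measurableSet_Icc

end

theorem stmt_7_general {d : ℕ}
    (p : (Fin d → ℝ) → ℝ) (hpc : Continuous p) (hpi : Integrable p)
    (hfour : Integrable (fun ξ : Fin d → ℝ =>
      ∫ y : Fin d → ℝ, Complex.exp (-Complex.I * (∑ j, ξ j * y j)) * (p y : ℂ))) :
    ∀ x : Fin d → ℝ,
      Tendsto
        (fun R : ℝ => (1 / (2 * Real.pi) ^ d) *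
          ∫ y : Fin d → ℝ,
            (∫ z in Set.univ.pi fun _ : Fin d => Set.Icc (-R) R,
              Real.cos (∑ j, z j * (x j - y j))) * p y)
        atTop (nhds (p x)) := by
  intro x
  have hFp : Integrable (fourierPi fun y => (p y : ℂ)) := hfour
  have hlim := AECover.integral_tendsto_of_countably_generated (aecover_univ_pi_Icc _)
    (hFp.exp_I_mul_mul (θ := (· ⬝ᵥ x)) (by fun_prop))
  rw [integral_exp_mul_fourierPi (f := fun y => (p y : ℂ)) (by fun_prop) hpi.ofReal hFp,
    Fintype.card_fin] at hlim
  have hre := ((Complex.continuous_re.tendsto _).comp hlim).const_mul (1 / (2 * π) ^ d)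
  rw [Complex.smul_re, Complex.ofReal_re, smul_eq_mul, ← mul_assoc,
    one_div_mul_cancel (by positivity), one_mul] at hre
  refine hre.congr fun R => ?_
  have : IsFiniteMeasure (volume.restrict (Set.univ.pi fun _ : Fin d => Set.Icc (-R) R)) :=
    isFiniteMeasure_restrict.2 (isCompact_univ_pi fun _ => isCompact_Icc).measure_ne_top
  exact congrArg _ (re_integral_exp_mul_fourierPi hpi x)

/-- Truncated Fourier integral (sinc-kernel) representation: for continuous
integrable `p` with integrable Fourier transform,
`lim_{R→∞} (2π)^{-d} ∫ (∫_{[-R,R]^d} cos(z·(x-y)) dz) p(y) dy = p(x)`. -/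
theorem stmt_7 {d : ℕ} (hd : 1 ≤ d)
    (p : (Fin d → ℝ) → ℝ) (hpc : Continuous p) (hpi : Integrable p)
    (hfour : Integrable (fun ξ : Fin d → ℝ =>
      ∫ y : Fin d → ℝ, Complex.exp (-Complex.I * (∑ j, ξ j * y j)) * (p y : ℂ))) :
    ∀ x : Fin d → ℝ,
      Tendsto
        (fun R : ℝ => (1 / (2 * Real.pi) ^ d) *
          ∫ y : Fin d → ℝ,
            (∫ z in Set.univ.pi fun _ : Fin d => Set.Icc (-R) R,
              Real.cos (∑ j, z j * (x j - y j))) * p y)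
        atTop (nhds (p x)) :=
  stmt_7_general p hpc hpi hfour
end
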